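/- Let S₂ := (1/2)(|00⟩⟨00| − |01⟩⟨01| + |10⟩⟨10| + |11⟩⟨11|) acting on ℂ² ⊗ ℂ², and for q ∈ (0,1] let X₂ := q|φ₂⁺⟩⟨φ₂⁺| + (1−q)|01⟩⟨01|. Then Tr(S₂σ) ≥ 0 for every σ ∈ 𝔄𝔉₂, and Tr(S₂X₂) = q − 1/2; in particular, for q < 1/2 one has Tr(S₂X₂) < 0 and hence X₂ ∉ 𝔄𝔉₂. -/

import Mathlib

open Matrix Kronecker Complex
open scoped ComplexOrder

/-- The canonical maximally entangled vector `|ψ⁺⟩ = (1/√d) ∑ᵢ |ii⟩` on `ℂ^d ⊗ ℂ^d`. -/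
noncomputable def psiPlus (d : ℕ) : (Fin d × Fin d) → ℂ :=
  fun p => if p.1 = p.2 then ((Real.sqrt d)⁻¹ : ℝ) else 0

/-- The fully entangled fraction: the supremum over `d × d` unitaries `V` of
`⟨ψ⁺| (I ⊗ V)† ρ (I ⊗ V) |ψ⁺⟩`. -/
noncomputable def fef (d : ℕ) (ρ : Matrix (Fin d × Fin d) (Fin d × Fin d) ℂ) : ℝ :=
  ⨆ V : Matrix.unitaryGroup (Fin d) ℂ,
    (star (psiPlus d) ⬝ᵥ
      ((((1 : Matrix (Fin d) (Fin d) ℂ) ⊗ₖ (V : Matrix (Fin d) (Fin d) ℂ))ᴴ * ρ *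
        ((1 : Matrix (Fin d) (Fin d) ℂ) ⊗ₖ (V : Matrix (Fin d) (Fin d) ℂ))) *ᵥ psiPlus d)).re

/-- A density matrix: positive semidefinite with unit trace. -/
def IsDensityMatrix {n : Type*} [Fintype n] (ρ : Matrix n n ℂ) : Prop :=
  ρ.PosSemidef ∧ ρ.trace = 1

/-- `ρ` has absolute fully entangled fraction: `F(UρU†) ≤ 1/d` for every unitary `U`. -/
def AbsFEF (d : ℕ) (ρ : Matrix (Fin d × Fin d) (Fin d × Fin d) ℂ) : Prop :=
  ∀ U ∈ Matrix.unitaryGroup (Fin d × Fin d) ℂ, fef d (U * ρ * Uᴴ) ≤ 1 / d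

/-- Basis vector `|ij⟩` of `ℂ^d ⊗ ℂ^d`. -/
def ket (d : ℕ) (i j : Fin d) : (Fin d × Fin d) → ℂ :=
  fun p => if p = (i, j) then 1 else 0

/-- Rank-one projector `|v⟩⟨v|`. -/
def proj {n : Type*} (v : n → ℂ) : Matrix n n ℂ :=
  Matrix.vecMulVec v (star v)

/-- The state `X₂ = q|φ₂⁺⟩⟨φ₂⁺| + (1−q)|01⟩⟨01|`. -/
noncomputable def X₂ (q : ℝ) : Matrix (Fin 2 × Fin 2) (Fin 2 × Fin 2) ℂ :=
  (q : ℂ) • proj (psiPlus 2) + ((1 - q : ℝ) : ℂ) • proj (ket 2 0 1)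

/-- The witness `S₂ = (1/2)(|00⟩⟨00| − |01⟩⟨01| + |10⟩⟨10| + |11⟩⟨11|)`. -/
noncomputable def S₂ : Matrix (Fin 2 × Fin 2) (Fin 2 × Fin 2) ℂ :=
  (1/2 : ℂ) • (proj (ket 2 0 0) - proj (ket 2 0 1) + proj (ket 2 1 0) + proj (ket 2 1 1))

/-!
Since `S₂ = ½(I - 2|01⟩⟨01|)`, we have `Tr(S₂σ) = ½ Tr σ - ⟨01|σ|01⟩`, so the witness property
amounts to `⟨01|σ|01⟩ ≤ 1/2` on `𝔄𝔉₂`. As `|01⟩ ⟂ |φ₂⁺⟩`, the Householder reflection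
`U = I - |u⟩⟨u|` with `u = |φ₂⁺⟩ - |01⟩` is a unitary exchanging the two vectors, and taking
`V = I` in the fully entangled fraction gives
`⟨01|σ|01⟩ = ⟨φ₂⁺|UσU†|φ₂⁺⟩ ≤ F(UσU†) ≤ 1/2`.
For `X₂` one computes `Tr X₂ = 1` and `⟨01|X₂|01⟩ = 1 - q`.
-/

lemma isCompact_unitaryGroup {n 𝕜 : Type*} [Fintype n] [DecidableEq n] [RCLike 𝕜] :
    IsCompact (unitaryGroup n 𝕜 : Set (Matrix n n 𝕜)) := by
  have hclosed : IsClosed (unitaryGroup n 𝕜 : Set (Matrix n n 𝕜)) := isClosed_unitary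
  open scoped Matrix.Norms.Elementwise in
  exact Metric.isCompact_of_isClosed_isBounded hclosed
    (isBounded_iff_forall_norm_le.2 ⟨1, fun _ hU => entrywise_sup_norm_bound_of_unitary hU⟩)

lemma re_dotProduct_mulVec_le_fef (d : ℕ) (ρ : Matrix (Fin d × Fin d) (Fin d × Fin d) ℂ) :
    (star (psiPlus d) ⬝ᵥ (ρ *ᵥ psiPlus d)).re ≤ fef d ρ := by
  have hK : Continuous fun V : Matrix (Fin d) (Fin d) ℂ => (1 : Matrix (Fin d) (Fin d) ℂ) ⊗ₖ V :=
    continuous_matrix fun p q => continuous_const.mul (continuous_id.matrix_elem p.2 q.2)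
  have hcont : Continuous fun V : Matrix (Fin d) (Fin d) ℂ =>
      (star (psiPlus d) ⬝ᵥ ((((1 : Matrix (Fin d) (Fin d) ℂ) ⊗ₖ V)ᴴ * ρ *
        ((1 : Matrix (Fin d) (Fin d) ℂ) ⊗ₖ V)) *ᵥ psiPlus d)).re := by
    fun_prop
  refine (le_ciSup ((isCompact_unitaryGroup.image hcont).bddAbove.mono ?_) 1).trans_eq' ?_
  · rintro _ ⟨V, rfl⟩
    exact ⟨V, V.2, rfl⟩
  · simp

lemma conjTranspose_one_sub_proj {n : Type*} [DecidableEq n] (u : n → ℂ) :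
    (1 - proj u)ᴴ = 1 - proj u := by
  simp [proj]

section Projections

variable {n : Type*} [Fintype n]

lemma trace_proj (v : n → ℂ) : (proj v).trace = star v ⬝ᵥ v := by
  rw [proj, trace_vecMulVec, dotProduct_comm]

lemma proj_mul_proj (v : n → ℂ) : proj v * proj v = (star v ⬝ᵥ v) • proj v := by
  rw [proj, vecMulVec_mul_vecMulVec, vecMulVec_smul]

variable [DecidableEq n]

lemma one_sub_proj_mulVec (u x : n → ℂ) : (1 - proj u) *ᵥ x = x - (star u ⬝ᵥ x) • u := by
  rw [sub_mulVec, one_mulVec, proj, vecMulVec_mulVec, op_smul_eq_smul]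

lemma one_sub_proj_mem_unitaryGroup {u : n → ℂ} (hu : star u ⬝ᵥ u = 2) :
    1 - proj u ∈ unitaryGroup n ℂ := by
  rw [mem_unitaryGroup_iff, star_eq_conjTranspose, conjTranspose_one_sub_proj, sub_mul, mul_sub,
    mul_sub, proj_mul_proj, hu, two_smul]
  noncomm_ring

lemma exists_unitary_conjTranspose_mulVec_eq {x y : n → ℂ} (hx : star x ⬝ᵥ x = 1)
    (hy : star y ⬝ᵥ y = 1) (hxy : star x ⬝ᵥ y = 0) :
    ∃ U ∈ unitaryGroup n ℂ, Uᴴ *ᵥ x = y := by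
  have hyx : star y ⬝ᵥ x = 0 := by rw [star_dotProduct, hxy, star_zero]
  refine ⟨1 - proj (x - y), one_sub_proj_mem_unitaryGroup ?_, ?_⟩
  · simp only [star_sub, dotProduct_sub, sub_dotProduct, hx, hy, hxy, hyx, sub_zero, zero_sub,
      sub_neg_eq_add]
    norm_num
  · rw [conjTranspose_one_sub_proj, one_sub_proj_mulVec]
    simp [sub_dotProduct, hx, hyx]

end Projections

lemma star_psiPlus_dotProduct_self {d : ℕ} (hd : d ≠ 0) : star (psiPlus d) ⬝ᵥ psiPlus d = 1 := by
  have hsq : (√(d : ℝ))⁻¹ * (√(d : ℝ))⁻¹ = (d : ℝ)⁻¹ := by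
    rw [← mul_inv, Real.mul_self_sqrt d.cast_nonneg]
  simp only [dotProduct, Pi.star_apply, psiPlus, ofReal_inv, RCLike.star_def, mul_ite, mul_zero,
    Fintype.sum_prod_type, Finset.sum_ite_eq, Finset.mem_univ, ↓reduceIte, map_inv₀, conj_ofReal,
    Finset.sum_const, Finset.card_univ, Fintype.card_fin, nsmul_eq_mul]
  norm_cast
  rw [hsq, mul_inv_cancel₀ (by exact_mod_cast hd)]

lemma star_psiPlus_dotProduct_ket {d : ℕ} {i j : Fin d} (hij : i ≠ j) :
    star (psiPlus d) ⬝ᵥ ket d i j = 0 := by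
  simp [psiPlus, ket, dotProduct, hij]

lemma star_ket_dotProduct_self {d : ℕ} (i j : Fin d) : star (ket d i j) ⬝ᵥ ket d i j = 1 := by
  simp [ket, dotProduct]

lemma star_ket_dotProduct_mulVec_ket {d : ℕ} (σ : Matrix (Fin d × Fin d) (Fin d × Fin d) ℂ)
    (i j : Fin d) : star (ket d i j) ⬝ᵥ (σ *ᵥ ket d i j) = σ (i, j) (i, j) := by
  simp [ket, dotProduct, mulVec]

lemma AbsFEF.re_apply_le {d : ℕ} {σ : Matrix (Fin d × Fin d) (Fin d × Fin d) ℂ}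
    (hσ : AbsFEF d σ) {i j : Fin d} (hij : i ≠ j) : (σ (i, j) (i, j)).re ≤ 1 / d := by
  obtain ⟨U, hU, hUψ⟩ := exists_unitary_conjTranspose_mulVec_eq
    (star_psiPlus_dotProduct_self (Fin.pos i).ne') (star_ket_dotProduct_self i j)
    (star_psiPlus_dotProduct_ket hij)
  calc (σ (i, j) (i, j)).re = (star (psiPlus d) ⬝ᵥ ((U * σ * Uᴴ) *ᵥ psiPlus d)).re := by
        rw [← star_ket_dotProduct_mulVec_ket σ, ← hUψ, star_mulVec, conjTranspose_conjTranspose,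
          ← dotProduct_mulVec, mulVec_mulVec, mulVec_mulVec, Matrix.mul_assoc]
    _ ≤ fef d (U * σ * Uᴴ) := re_dotProduct_mulVec_le_fef d _
    _ ≤ 1 / d := hσ U hU

lemma trace_S₂_mul (σ : Matrix (Fin 2 × Fin 2) (Fin 2 × Fin 2) ℂ) :
    (S₂ * σ).trace = 1 / 2 * σ.trace - σ (0, 1) (0, 1) := by
  simp [Matrix.trace, Matrix.mul_apply, S₂, proj, ket, vecMulVec_apply,
    Fintype.sum_prod_type, Fin.sum_univ_two, Prod.ext_iff]
  ring

lemma re_trace_S₂_mul_nonneg {σ : Matrix (Fin 2 × Fin 2) (Fin 2 × Fin 2) ℂ}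
    (htr : σ.trace = 1) (hσ : AbsFEF 2 σ) : 0 ≤ ((S₂ * σ).trace).re := by
  have h01 := hσ.re_apply_le (i := 0) (j := 1) (by decide)
  rw [trace_S₂_mul, htr]
  norm_num at h01 ⊢
  linarith

lemma trace_X₂ (q : ℝ) : (X₂ q).trace = 1 := by
  simp [X₂, trace_proj, star_psiPlus_dotProduct_self two_ne_zero, star_ket_dotProduct_self]

lemma X₂_apply_zero_one (q : ℝ) : X₂ q (0, 1) (0, 1) = 1 - q := by
  simp [X₂, proj, vecMulVec_apply, ket, psiPlus]

lemma re_trace_S₂_mul_X₂ (q : ℝ) : ((S₂ * X₂ q).trace).re = q - 1 / 2 := by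
  rw [trace_S₂_mul, trace_X₂, X₂_apply_zero_one]
  norm_num
  ring

theorem S₂_witnesses_X₂_general (q : ℝ) :
    (∀ σ : Matrix (Fin 2 × Fin 2) (Fin 2 × Fin 2) ℂ,
        IsDensityMatrix σ → AbsFEF 2 σ → 0 ≤ ((S₂ * σ).trace).re) ∧
      ((S₂ * X₂ q).trace).re = q - 1/2 ∧
      (q < 1/2 → ((S₂ * X₂ q).trace).re < 0 ∧ ¬ AbsFEF 2 (X₂ q)) := by
  refine ⟨fun σ hσ habs => re_trace_S₂_mul_nonneg hσ.2 habs, re_trace_S₂_mul_X₂ q, fun hq => ?_⟩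
  rw [re_trace_S₂_mul_X₂]
  refine ⟨by linarith, fun habs => ?_⟩
  have := re_trace_S₂_mul_nonneg (trace_X₂ q) habs
  rw [re_trace_S₂_mul_X₂] at this
  linarith

/-- `S₂` has nonnegative expectation on all of `𝔄𝔉₂`, and `Tr(S₂X₂) = q − 1/2`; in
particular for `q < 1/2` one gets `Tr(S₂X₂) < 0`, hence `X₂ ∉ 𝔄𝔉₂`. -/
theorem S₂_witnesses_X₂ (q : ℝ) (hq0 : 0 < q) (hq1 : q ≤ 1) :
    (∀ σ : Matrix (Fin 2 × Fin 2) (Fin 2 × Fin 2) ℂ,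
        IsDensityMatrix σ → AbsFEF 2 σ → 0 ≤ ((S₂ * σ).trace).re) ∧
      ((S₂ * X₂ q).trace).re = q - 1/2 ∧
      (q < 1/2 → ((S₂ * X₂ q).trace).re < 0 ∧ ¬ AbsFEF 2 (X₂ q)) :=
  S₂_witnesses_X₂_general q
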